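/- Let μ ∈ ℝ, σ > 0 and β ≥ 0. Then the off-diagonal entry of the matrix J_β(μ,σ) = ∫₀^∞ u_{μ,σ}(x) u_{μ,σ}(x)ᵀ f_{μ,σ}(x)^{1+β} dx satisfies ∫₀^∞ u₁(x) u₂(x) · f_{μ,σ}(x)^{1+β} dx = L(β,μ,σ) · β(β − 2 − β²σ²/(1+β)). -/

import Mathlib

/-!
Substituting `x = exp t` turns `exp t · f(exp t)^(1+β)` into a constant multiple of the Gaussian
`exp (-b (t - m)²)` with `b = (1+β)/(2σ²)` and `m = μ - βσ²/(1+β)` (complete the square), while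
`u₁ u₂` becomes the cubic `(t-μ)((t-μ)² - σ²)/σ⁵`. After centring at `m`, the odd moments of the
Gaussian vanish and the second moment is `1/(2b)` times its mass `√(π/b)`.
-/

open Real MeasureTheory Set

/-- The log-normal density with parameters `μ` and `σ`. -/
noncomputable def lognormalPdf (μ σ : ℝ) (x : ℝ) : ℝ :=
  if 0 < x then
    (1 / (x * σ * Real.sqrt (2 * Real.pi))) * Real.exp (-(Real.log x - μ) ^ 2 / (2 * σ ^ 2))
  else 0

/-- First component of the score function of the log-normal model. -/
noncomputable def scoreU1 (μ σ : ℝ) (x : ℝ) : ℝ := (Real.log x - μ) / σ ^ 2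

/-- Second component of the score function of the log-normal model. -/
noncomputable def scoreU2 (μ σ : ℝ) (x : ℝ) : ℝ := ((Real.log x - μ) ^ 2 - σ ^ 2) / σ ^ 3

/-- The common multiplicative factor `L(β, μ, σ)`. -/
noncomputable def Lfactor (β μ σ : ℝ) : ℝ :=
  Real.exp (-β * μ + β ^ 2 * σ ^ 2 / (2 * (1 + β))) /
    (σ ^ (1 + β) * (2 * Real.pi) ^ (β / 2) * (1 + β) ^ ((5 : ℝ) / 2))

theorem integral_eq_zero_of_odd {E : Type*} [NormedAddCommGroup E] [NormedSpace ℝ E]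
    {f : ℝ → E} (hf : Function.Odd f) : ∫ x, f x = 0 := by
  have h := integral_neg_eq_self f volume
  simp_rw [hf _, integral_neg] at h
  have : (2 : ℝ) • ∫ x, f x = 0 := by rw [two_smul]; nth_rw 1 [← h]; exact neg_add_cancel _
  simpa using this

lemma integrable_pow_mul_exp_neg_mul_sq {b : ℝ} (hb : 0 < b) (n : ℕ) :
    Integrable fun x : ℝ => x ^ n * exp (-b * x ^ 2) := by
  simpa using integrable_rpow_mul_exp_neg_mul_sq hb (s := n) (by linarith [n.cast_nonneg (α := ℝ)])

lemma integral_pow_mul_exp_neg_mul_sq_of_odd (b : ℝ) {n : ℕ} (hn : Odd n) :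
    ∫ x : ℝ, x ^ n * exp (-b * x ^ 2) = 0 :=
  integral_eq_zero_of_odd fun x => by simp [hn.neg_pow]

lemma integral_sq_mul_exp_neg_mul_sq {b : ℝ} (hb : 0 < b) :
    ∫ x : ℝ, x ^ 2 * exp (-b * x ^ 2) = √(π / b) / (2 * b) := by
  have h := integral_rpow_mul_exp_neg_mul_rpow (p := 2) (q := 2) two_pos (by norm_num) hb
  rw [show ((2 : ℝ) + 1) / 2 = 1 / 2 + 1 by norm_num, Gamma_add_one (by norm_num),
    Gamma_one_half_eq, show -((2 : ℝ) + 1) / 2 = -1 - 1 / 2 by norm_num,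
    rpow_sub hb, rpow_neg_one, ← sqrt_eq_rpow] at h
  simp only [rpow_ofNat] at h
  have h2 := integral_comp_abs (f := fun x => x ^ 2 * exp (-b * x ^ 2))
  simp only [sq_abs] at h2
  rw [h2, h, sqrt_div' _ hb.le]
  field_simp

lemma integral_cubic_mul_exp_neg_mul_sq {b : ℝ} (hb : 0 < b) (c₀ c₁ c₂ c₃ : ℝ) :
    ∫ x : ℝ, (c₃ * x ^ 3 + c₂ * x ^ 2 + c₁ * x + c₀) * exp (-b * x ^ 2) =
      (c₂ / (2 * b) + c₀) * √(π / b) := by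
  have hI := integrable_pow_mul_exp_neg_mul_sq hb
  have expand : ∀ x : ℝ, (c₃ * x ^ 3 + c₂ * x ^ 2 + c₁ * x + c₀) * exp (-b * x ^ 2) =
      c₃ * (x ^ 3 * exp (-b * x ^ 2)) + c₂ * (x ^ 2 * exp (-b * x ^ 2)) +
        c₁ * (x ^ 1 * exp (-b * x ^ 2)) + c₀ * (x ^ 0 * exp (-b * x ^ 2)) := fun x => by ring
  simp_rw [expand]
  rw [integral_add (by fun_prop) ((hI 0).const_mul _),
    integral_add (by fun_prop) ((hI 1).const_mul _),
    integral_add ((hI 3).const_mul _) ((hI 2).const_mul _), integral_const_mul,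
    integral_const_mul, integral_const_mul, integral_const_mul,
    integral_pow_mul_exp_neg_mul_sq_of_odd b (by decide : Odd 3),
    integral_pow_mul_exp_neg_mul_sq_of_odd b odd_one, integral_sq_mul_exp_neg_mul_sq hb]
  simp only [pow_zero, one_mul, integral_gaussian]
  ring

theorem integral_Ioi_zero_eq_integral_exp_smul_comp_exp {E : Type*} [NormedAddCommGroup E]
    [NormedSpace ℝ E] (g : ℝ → E) : ∫ x in Ioi 0, g x = ∫ t, exp t • g (exp t) := by
  simpa [abs_of_pos (exp_pos _)] using integral_image_eq_integral_abs_deriv_smul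
    MeasurableSet.univ (fun t _ => (hasDerivAt_exp t).hasDerivWithinAt) exp_injective.injOn g

section LogNormal

variable {μ σ β : ℝ}

lemma lognormalPdf_exp (hσ : 0 < σ) (t : ℝ) :
    lognormalPdf μ σ (exp t) = exp (-t - (t - μ) ^ 2 / (2 * σ ^ 2)) / (σ * √(2 * π)) := by
  rw [lognormalPdf, if_pos (exp_pos t), log_exp, exp_sub, exp_neg, neg_div, exp_neg]
  field_simp

lemma exp_mul_lognormalPdf_exp_rpow (hσ : 0 < σ) (hβ : 0 < 1 + β) (t : ℝ) :
    exp t * lognormalPdf μ σ (exp t) ^ (1 + β) =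
      exp (-β * μ + β ^ 2 * σ ^ 2 / (2 * (1 + β))) / (σ * √(2 * π)) ^ (1 + β) *
        exp (-((1 + β) / (2 * σ ^ 2)) * (t - (μ - β * σ ^ 2 / (1 + β))) ^ 2) := by
  rw [lognormalPdf_exp hσ, div_rpow (exp_pos _).le (by positivity), ← exp_mul, mul_div_assoc',
    ← exp_add, div_mul_eq_mul_div, ← exp_add]
  congr 2
  field_simp
  ring

/-- The right-hand side is `A · √(π / b)`, the total mass of the Gaussian in
`exp_mul_lognormalPdf_exp_rpow`. -/
lemma Lfactor_mul_eq (hσ : 0 < σ) (hβ : 0 < 1 + β) :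
    Lfactor β μ σ * (σ * (1 + β) ^ 2) =
      exp (-β * μ + β ^ 2 * σ ^ 2 / (2 * (1 + β))) / (σ * √(2 * π)) ^ (1 + β) *
        √(π / ((1 + β) / (2 * σ ^ 2))) := by
  have h2π : 0 < 2 * π := by positivity
  have hsqrt : √(π / ((1 + β) / (2 * σ ^ 2))) = σ * √(2 * π) / √(1 + β) := by
    rw [show π / ((1 + β) / (2 * σ ^ 2)) = σ ^ 2 * (2 * π) / (1 + β) by field_simp,
      sqrt_div' _ hβ.le, sqrt_mul (by positivity), sqrt_sq hσ.le]
  have hpow : (σ * √(2 * π)) ^ (1 + β) = σ ^ (1 + β) * (2 * π) ^ (β / 2) * √(2 * π) := by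
    rw [mul_rpow hσ.le (sqrt_nonneg _), sqrt_eq_rpow, ← rpow_mul h2π.le, mul_assoc,
      ← rpow_add h2π]
    ring_nf
  have h52 : (1 + β) ^ ((5 : ℝ) / 2) = (1 + β) ^ 2 * √(1 + β) := by
    rw [show (5 : ℝ) / 2 = (2 : ℕ) + 1 / 2 by norm_num, rpow_add hβ, rpow_natCast,
      ← sqrt_eq_rpow]
  rw [Lfactor, hsqrt, hpow, h52]
  have := rpow_pos_of_pos hσ (1 + β)
  have := rpow_pos_of_pos h2π (β / 2)
  have := sqrt_pos.mpr hβ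
  have := sqrt_pos.mpr h2π
  field_simp

end LogNormal

/-- The off-diagonal entry of the matrix `J_β(μ,σ)`. -/
theorem J_entry_12 (μ σ β : ℝ) (hσ : 0 < σ) (hβ : 0 ≤ β) :
    ∫ x in Ioi (0 : ℝ), scoreU1 μ σ x * scoreU2 μ σ x * lognormalPdf μ σ x ^ (1 + β) =
      Lfactor β μ σ * (β * (β - 2 - β ^ 2 * σ ^ 2 / (1 + β))) := by
  have h1β : 0 < 1 + β := by linarith
  set a := β * σ ^ 2 / (1 + β) with ha
  set b := (1 + β) / (2 * σ ^ 2) with hb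
  set A := exp (-β * μ + β ^ 2 * σ ^ 2 / (2 * (1 + β))) / (σ * √(2 * π)) ^ (1 + β) with hA
  clear_value a b A
  have shifted : ∀ y, exp (y + (μ - a)) * (scoreU1 μ σ (exp (y + (μ - a))) *
        scoreU2 μ σ (exp (y + (μ - a))) * lognormalPdf μ σ (exp (y + (μ - a))) ^ (1 + β)) =
      A / σ ^ 5 * ((1 * y ^ 3 + -3 * a * y ^ 2 + (3 * a ^ 2 - σ ^ 2) * y + (σ ^ 2 * a - a ^ 3))
        * exp (-b * y ^ 2)) := fun y => by
    rw [mul_left_comm, exp_mul_lognormalPdf_exp_rpow hσ h1β, ← hA, ← ha, ← hb,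
      add_sub_cancel_right]
    simp only [scoreU1, scoreU2, log_exp]
    field_simp
    ring
  calc _ = ∫ t, exp t • (scoreU1 μ σ (exp t) * scoreU2 μ σ (exp t) *
          lognormalPdf μ σ (exp t) ^ (1 + β)) :=
        integral_Ioi_zero_eq_integral_exp_smul_comp_exp _
    _ = A / σ ^ 5 * ∫ y, (1 * y ^ 3 + -3 * a * y ^ 2 + (3 * a ^ 2 - σ ^ 2) * y +
          (σ ^ 2 * a - a ^ 3)) * exp (-b * y ^ 2) := by
        rw [← integral_add_right_eq_self _ (μ - a), ← integral_const_mul]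
        simp only [smul_eq_mul, shifted]
    _ = A / σ ^ 5 * ((-3 * a / (2 * b) + (σ ^ 2 * a - a ^ 3)) * √(π / b)) := by
        rw [integral_cubic_mul_exp_neg_mul_sq (by rw [hb]; positivity)]
    _ = _ := by
        have hL : A * √(π / b) = Lfactor β μ σ * (σ * (1 + β) ^ 2) := by
          rw [Lfactor_mul_eq hσ h1β, hA, hb]
        rw [show ∀ c, A / σ ^ 5 * (c * √(π / b)) = c / σ ^ 5 * (A * √(π / b)) by
          intro c; ring, hL, ha, hb]
        field_simp
        ring
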